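/- arXiv:2205.05286 — 3 statements merged into one kernel-verified Lean document; each statement's English description precedes it below -/
import Mathlib

section
/- Let K be a field of characteristic zero, M a lattice, P = σ∨ ∩ M the monoid of lattice points of the dual of a finitely generated cone σ with extremal ray primitive generators v₁, …, v_k, and let A = K[P] be the monoid algebra with basis {χ^m : m ∈ P}. Let e ∈ M be a Demazure root with distinguished ray ρ_j (⟨e,v_j⟩ = −1, ⟨e,v_i⟩ ≥ 0 for i ≠ j). Then the K-linear map ∂_e defined on basis elements by ∂_e(χ^m) = ⟨m, v_j⟩ · χ^{m+e} is a well-defined derivation of A. -/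
/-!
Since both sides of the Leibniz rule are bilinear, it suffices to check it on monomials. Pushed
into `K[M]` along the injective map induced by `P ↪ M`, the map becomes `χ^m ↦ ⟨m, v_j⟩ χ^{m+e}`
for every `m ∈ P` (the factor vanishes exactly when `m + e` may leave `P`), and on monomials the
Leibniz rule is then the additivity of `m ↦ ⟨m, v_j⟩`.
-/

open AddMonoidAlgebra

namespace AddMonoidAlgebra

theorem leibniz_of_single {R G : Type*} [CommSemiring R] [AddMonoid G] (D : R[G] →ₗ[R] R[G])
    (hD : ∀ m m' : G, D (single m 1 * single m' 1)
      = single m 1 * D (single m' 1) + single m' 1 * D (single m 1))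
    (a b : R[G]) : D (a * b) = a * D b + b * D a := by
  induction a using induction_linear with
  | zero => simp
  | add a₁ a₂ ih₁ ih₂ => simp only [add_mul, map_add, ih₁, ih₂, mul_add]; abel
  | single m c =>
    induction b using induction_linear with
    | zero => simp
    | add b₁ b₂ ih₁ ih₂ => simp only [mul_add, map_add, ih₁, ih₂, add_mul]; abel
    | single m' c' =>
      have hsingle (n : G) (r : R) : single n r = r • single n 1 := by simp
      rw [hsingle m c, hsingle m' c']
      simp only [map_smul, hD, smul_add, mul_smul_comm, smul_mul_assoc]
      rw [smul_comm c c']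

variable {K M : Type*} [CommSemiring K] [AddCommMonoid M] (P : AddSubmonoid M) (w : M →+ K) (e : M)

open Classical in
/-- `χ^m ↦ w(m) χ^{m+e}`, set to `0` when `m + e ∉ P`. -/
noncomputable def weightShift : K[P] →ₗ[K] K[P] :=
  (basis P K).constr K fun m ↦
    if h : (m : M) + e ∈ P then w m • single ⟨m + e, h⟩ 1 else 0

theorem weightShift_single (m : P) (h : (m : M) + e ∈ P) :
    weightShift P w e (single m 1) = w m • single ⟨m + e, h⟩ 1 := by
  rw [weightShift, ← basis_apply, Module.Basis.constr_basis, dif_pos h]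

theorem weightShift_single_of_eq_zero (m : P) (h : w m = 0) :
    weightShift P w e (single m 1) = 0 := by
  rw [weightShift, ← basis_apply, Module.Basis.constr_basis]
  split_ifs <;> simp [h]

variable {P w e}

theorem mapDomain_weightShift_single (hw : ∀ m ∈ P, w m ≠ 0 → m + e ∈ P) (m : P) :
    mapDomain P.subtype (weightShift P w e (single m 1)) = w m • single ((m : M) + e) 1 := by
  by_cases h : w m = 0
  · simp [weightShift_single_of_eq_zero P w e m h, h]
  · simp [weightShift_single P w e m (hw m m.2 h)]

theorem weightShift_leibniz (hw : ∀ m ∈ P, w m ≠ 0 → m + e ∈ P) (a b : K[P]) :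
    weightShift P w e (a * b) = a * weightShift P w e b + b * weightShift P w e a := by
  refine leibniz_of_single _ (fun m m' ↦ ?_) a b
  apply mapDomain_injective (f := P.subtype) Subtype.val_injective
  rw [single_mul_single, mul_one, mapDomain_add, mapDomain_mul, mapDomain_mul]
  simp only [mapDomain_single, mapDomain_weightShift_single hw, mul_smul_comm, single_mul_single]
  rw [AddSubmonoid.coe_add, map_add, add_comm (w m), add_smul, mul_one]
  congr 3 <;> simp only [AddSubmonoid.coe_subtype] <;> abel

end AddMonoidAlgebra

theorem add_mem_of_demazureRoot {M ι : Type*} [AddCommGroup M] (v : ι → M →ₗ[ℤ] ℤ) (j : ι)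
    {e : M} (he₁ : v j e = -1) (he₂ : ∀ i ≠ j, 0 ≤ v i e)
    {P : AddSubmonoid M} (hP : ∀ m : M, m ∈ P ↔ ∀ i, 0 ≤ v i m)
    {m : M} (hm : m ∈ P) (hmj : v j m ≠ 0) : m + e ∈ P := by
  rw [hP] at hm ⊢
  intro i
  rw [map_add]
  by_cases hij : i = j
  · subst hij
    have := hm i
    omega
  · linarith [hm i, he₂ i hij]

theorem demazure_root_derivation_general
    {K : Type*} [Field K]
    {M : Type*} [AddCommGroup M]
    {k : ℕ} (v : Fin k → (M →ₗ[ℤ] ℤ)) (j : Fin k) (e : M)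
    (he₁ : v j e = -1) (he₂ : ∀ i ≠ j, 0 ≤ v i e)
    (P : AddSubmonoid M) (hP : ∀ m : M, m ∈ P ↔ ∀ i, 0 ≤ v i m) :
    ∃ D : AddMonoidAlgebra K P →ₗ[K] AddMonoidAlgebra K P,
      (∀ m : P,
        (v j (m : M) = 0 → D (AddMonoidAlgebra.single m 1) = 0) ∧
        (∀ h : (m : M) + e ∈ P,
          D (AddMonoidAlgebra.single m 1)
            = ((v j (m : M) : K)) • AddMonoidAlgebra.single (⟨(m : M) + e, h⟩ : P) (1 : K))) ∧
      (∀ a b : AddMonoidAlgebra K P, D (a * b) = a * D b + b * D a) := by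
  let w : M →+ K := (Int.castAddHom K).comp (v j).toAddMonoidHom
  have hw : ∀ m ∈ P, w m ≠ 0 → m + e ∈ P := fun m hm hwm ↦
    add_mem_of_demazureRoot v j he₁ he₂ hP hm fun h ↦ hwm (by simp [w, h])
  exact ⟨weightShift P w e,
    fun m ↦ ⟨fun h ↦ weightShift_single_of_eq_zero P w e m (by simp [w, h]),
      weightShift_single P w e m⟩,
    weightShift_leibniz hw⟩

/-- The map `∂_e(χ^m) = ⟨m, v_j⟩ χ^{m+e}` attached to a Demazure root `e` is a
well-defined `K`-linear derivation of the monoid algebra `K[P]`, `P = σ∨ ∩ M`. -/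
theorem demazure_root_derivation
    {K : Type*} [Field K] [CharZero K]
    {M : Type*} [AddCommGroup M] [Module.Free ℤ M] [Module.Finite ℤ M]
    {k : ℕ} (v : Fin k → (M →ₗ[ℤ] ℤ)) (j : Fin k) (e : M)
    (he₁ : v j e = -1) (he₂ : ∀ i ≠ j, 0 ≤ v i e)
    (P : AddSubmonoid M) (hP : ∀ m : M, m ∈ P ↔ ∀ i, 0 ≤ v i m) :
    ∃ D : AddMonoidAlgebra K P →ₗ[K] AddMonoidAlgebra K P,
      (∀ m : P,
        (v j (m : M) = 0 → D (AddMonoidAlgebra.single m 1) = 0) ∧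
        (∀ h : (m : M) + e ∈ P,
          D (AddMonoidAlgebra.single m 1)
            = ((v j (m : M) : K)) • AddMonoidAlgebra.single (⟨(m : M) + e, h⟩ : P) (1 : K))) ∧
      (∀ a b : AddMonoidAlgebra K P, D (a * b) = a * D b + b * D a) :=
  demazure_root_derivation_general v j e he₁ he₂ P hP
end

section
/- In the setting of the previous statement, the derivation ∂_e of K[P] given by ∂_e(χ^m) = ⟨m, v_j⟩ χ^{m+e} is locally nilpotent: for every m ∈ P, ∂_e^n(χ^m) = 0 for all n > ⟨m, v_j⟩. More precisely, ∂_e^n(χ^m) = ⟨m,v_j⟩·(⟨m,v_j⟩−1)⋯(⟨m,v_j⟩−n+1) · χ^{m+ne}. -/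
open AddMonoidAlgebra

/-! Along the ray `m, m + e, m + 2e, …` only the `j`-th coordinate changes, dropping by one at
each step, so `m + n • e` stays in `P` exactly while `n ≤ ⟨m, v_j⟩`. On this segment each
application of `∂_e` moves one step and multiplies by the current `j`-th coordinate, which gives
the falling factorial; at `n = ⟨m, v_j⟩` the coordinate is `0`, so one more application kills
the monomial. -/

section DemazureRoot

variable {M : Type*} [AddCommGroup M] {k : ℕ} {v : Fin k → (M →ₗ[ℤ] ℤ)} {j : Fin k} {e : M}
  {P : AddSubmonoid M}

theorem add_nsmul_mem_iff (he₁ : v j e = -1) (he₂ : ∀ i ≠ j, 0 ≤ v i e)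
    (hP : ∀ m : M, m ∈ P ↔ ∀ i, 0 ≤ v i m) (m : P) (n : ℕ) :
    (m : M) + n • e ∈ P ↔ (n : ℤ) ≤ v j m := by
  have hm := (hP m).1 m.2
  rw [hP]
  constructor
  · intro h
    simpa [he₁] using h j
  · intro hn i
    by_cases hij : i = j
    · subst hij
      simpa [he₁] using hn
    · simpa using add_nonneg (hm i) (mul_nonneg (Int.natCast_nonneg n) (he₂ i hij))

variable {R : Type*} [CommRing R] (D : R[P] →ₗ[R] R[P])

theorem iterate_single_eq_prod_smul (he₁ : v j e = -1) (he₂ : ∀ i ≠ j, 0 ≤ v i e)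
    (hP : ∀ m : M, m ∈ P ↔ ∀ i, 0 ≤ v i m)
    (hD : ∀ (m : P) (h : (m : M) + e ∈ P),
      D (single m 1) = (v j m : R) • single ⟨(m : M) + e, h⟩ 1)
    (m : P) (n : ℕ) (h : (m : M) + n • e ∈ P) :
    (⇑D)^[n] (single m 1) =
      (∏ i ∈ Finset.range n, ((v j m : R) - i)) • single ⟨(m : M) + n • e, h⟩ 1 := by
  induction n with
  | zero => simp
  | succ n ih =>
    have hn : (m : M) + n • e ∈ P := by
      rw [add_nsmul_mem_iff he₁ he₂ hP] at h ⊢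
      omega
    have hstep : (m : M) + n • e + e ∈ P := by rwa [add_assoc, ← succ_nsmul]
    have hcoord : v j ((m : M) + n • e) = v j m - n := by simp [he₁, sub_eq_add_neg]
    rw [Function.iterate_succ_apply', ih hn, map_smul, hD ⟨_, hn⟩ hstep, smul_smul,
      Finset.prod_range_succ]
    congr 2
    · simp [hcoord]
    · ext1
      simp [add_assoc, succ_nsmul]

theorem iterate_single_eq_zero (he₁ : v j e = -1) (he₂ : ∀ i ≠ j, 0 ≤ v i e)
    (hP : ∀ m : M, m ∈ P ↔ ∀ i, 0 ≤ v i m)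
    (hD : ∀ (m : P) (h : (m : M) + e ∈ P),
      D (single m 1) = (v j m : R) • single ⟨(m : M) + e, h⟩ 1)
    (hD₀ : ∀ m : P, v j m = 0 → D (single m 1) = 0)
    (m : P) (n : ℕ) (hn : v j m < n) :
    (⇑D)^[n] (single m 1) = 0 := by
  obtain ⟨a, ha⟩ : ∃ a : ℕ, v j m = a := Int.eq_ofNat_of_zero_le ((hP m).1 m.2 j)
  have hmem : (m : M) + a • e ∈ P := (add_nsmul_mem_iff he₁ he₂ hP m a).2 ha.ge
  have hkill : D (single ⟨(m : M) + a • e, hmem⟩ 1) = 0 := hD₀ _ (by simp [he₁, ha])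
  obtain ⟨b, rfl⟩ : ∃ b, n = b + 1 + a := ⟨n - (a + 1), by omega⟩
  rw [Function.iterate_add_apply, iterate_single_eq_prod_smul D he₁ he₂ hP hD m a hmem,
    Function.iterate_succ_apply, map_smul, hkill, smul_zero, iterate_map_zero]

end DemazureRoot

theorem demazure_root_derivation_locally_nilpotent_general
    {K : Type*} [Field K]
    {M : Type*} [AddCommGroup M]
    {k : ℕ} (v : Fin k → (M →ₗ[ℤ] ℤ)) (j : Fin k) (e : M)
    (he₁ : v j e = -1) (he₂ : ∀ i ≠ j, 0 ≤ v i e)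
    (P : AddSubmonoid M) (hP : ∀ m : M, m ∈ P ↔ ∀ i, 0 ≤ v i m)
    (D : AddMonoidAlgebra K P →ₗ[K] AddMonoidAlgebra K P)
    (hD : ∀ m : P,
        (v j (m : M) = 0 → D (AddMonoidAlgebra.single m 1) = 0) ∧
        (∀ h : (m : M) + e ∈ P,
          D (AddMonoidAlgebra.single m 1)
            = ((v j (m : M) : K)) • AddMonoidAlgebra.single (⟨(m : M) + e, h⟩ : P) (1 : K))) :
    ∀ (m : P) (n : ℕ),
      (∀ h : (m : M) + n • e ∈ P,
        (⇑D)^[n] (AddMonoidAlgebra.single m 1)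
          = (∏ i ∈ Finset.range n, (((v j (m : M) : K)) - (i : K))) •
              AddMonoidAlgebra.single (⟨(m : M) + n • e, h⟩ : P) (1 : K)) ∧
      ((v j (m : M)) < (n : ℤ) → (⇑D)^[n] (AddMonoidAlgebra.single m 1) = 0) := by
  intro m n
  have hD₁ := fun m => (hD m).2
  exact ⟨iterate_single_eq_prod_smul D he₁ he₂ hP hD₁ m n,
    iterate_single_eq_zero D he₁ he₂ hP hD₁ (fun m => (hD m).1) m n⟩

/-- The root derivation `∂_e` is locally nilpotent:
`∂_e^n(χ^m) = ⟨m,v_j⟩(⟨m,v_j⟩-1)⋯(⟨m,v_j⟩-n+1) χ^{m+ne}`, which vanishes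
once `n > ⟨m, v_j⟩`. -/
theorem demazure_root_derivation_locally_nilpotent
    {K : Type*} [Field K] [CharZero K]
    {M : Type*} [AddCommGroup M] [Module.Free ℤ M] [Module.Finite ℤ M]
    {k : ℕ} (v : Fin k → (M →ₗ[ℤ] ℤ)) (j : Fin k) (e : M)
    (he₁ : v j e = -1) (he₂ : ∀ i ≠ j, 0 ≤ v i e)
    (P : AddSubmonoid M) (hP : ∀ m : M, m ∈ P ↔ ∀ i, 0 ≤ v i m)
    (D : AddMonoidAlgebra K P →ₗ[K] AddMonoidAlgebra K P)
    (hD : ∀ m : P,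
        (v j (m : M) = 0 → D (AddMonoidAlgebra.single m 1) = 0) ∧
        (∀ h : (m : M) + e ∈ P,
          D (AddMonoidAlgebra.single m 1)
            = ((v j (m : M) : K)) • AddMonoidAlgebra.single (⟨(m : M) + e, h⟩ : P) (1 : K)))
    (hleib : ∀ a b : AddMonoidAlgebra K P, D (a * b) = a * D b + b * D a) :
    ∀ (m : P) (n : ℕ),
      (∀ h : (m : M) + n • e ∈ P,
        (⇑D)^[n] (AddMonoidAlgebra.single m 1)
          = (∏ i ∈ Finset.range n, (((v j (m : M) : K)) - (i : K))) •
              AddMonoidAlgebra.single (⟨(m : M) + n • e, h⟩ : P) (1 : K)) ∧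
      ((v j (m : M)) < (n : ℤ) → (⇑D)^[n] (AddMonoidAlgebra.single m 1) = 0) :=
  demazure_root_derivation_locally_nilpotent_general v j e he₁ he₂ P hP D hD
end

section
/- Let M be a lattice, v₁, …, v_s ∈ N, L = { (⟨m,v_i⟩)_i : m ∈ M } ≤ ℤ^s, C = ℤ^s/L. For a subset J ⊆ {1,…,s} let Γ(J) ⊆ C be the submonoid generated by { [e_i] : i ∈ J }. Suppose j ∉ J and there exists e ∈ M with ⟨e, v_j⟩ = −1, ⟨e, v_i⟩ ≥ 0 for all i ≠ j, and ⟨e, v_i⟩ = 0 for all i ∈ {1,…,s} \ (J ∪ {j}). Then Γ(J ∪ {j}) = Γ(J). -/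
/-- If a Demazure root `e` has `⟨e,v_j⟩ = -1`, nonnegative pairings elsewhere, and
zero pairings outside `J ∪ {j}`, then adjoining the class `[e_j]` to the monoid
generated by `{[e_i] : i ∈ J}` does not change it. -/
theorem class_group_monoid_unchanged
    {M : Type*} [AddCommGroup M] [Module.Free ℤ M] [Module.Finite ℤ M]
    {s : ℕ} (v : Fin s → (M →ₗ[ℤ] ℤ)) (J : Finset (Fin s)) (j : Fin s)
    (hj : j ∉ J) (e : M)
    (he₁ : v j e = -1) (he₂ : ∀ i ≠ j, 0 ≤ v i e)
    (he₃ : ∀ i, i ∉ J → i ≠ j → v i e = 0) :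
    AddSubmonoid.closure
        {x : (Fin s → ℤ) ⧸ LinearMap.range (LinearMap.pi v) |
          ∃ i, (i ∈ J ∨ i = j) ∧ x = Submodule.Quotient.mk (Pi.single i 1)}
      = AddSubmonoid.closure
        {x : (Fin s → ℤ) ⧸ LinearMap.range (LinearMap.pi v) |
          ∃ i ∈ J, x = Submodule.Quotient.mk (Pi.single i 1)} := by
  apply le_antisymm
  · apply AddSubmonoid.closure_le.mpr
    rintro x ⟨i, hi | rfl, rfl⟩
    · exact AddSubmonoid.subset_closure ⟨i, hi, rfl⟩
    · -- show [e_j] is in the closure of the J-generators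
      set g : Fin s → ℤ := fun k => (Pi.single i 1 : Fin s → ℤ) k + v k e with hgdef
      have hmk : (Submodule.Quotient.mk (Pi.single i 1) :
          (Fin s → ℤ) ⧸ LinearMap.range (LinearMap.pi v)) = Submodule.Quotient.mk g := by
        rw [Submodule.Quotient.eq]
        refine ⟨-e, ?_⟩
        ext k
        simp [hgdef, LinearMap.pi_apply]
      have hg_eq : g = ∑ a ∈ J, (v a e).toNat • (Pi.single a 1 : Fin s → ℤ) := by
        funext k
        rw [Finset.sum_apply]
        simp only [Pi.smul_apply]
        by_cases hki : k = i
        · subst hki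
          have : ∀ a ∈ J, (v a e).toNat • (Pi.single a 1 : Fin s → ℤ) k = 0 := by
            intro a ha
            have hak : a ≠ k := fun h => hj (h ▸ ha)
            simp [Pi.single_apply, hak]
          rw [Finset.sum_eq_zero this]
          simp [hgdef, he₁]
        · have hg : g k = v k e := by simp [hgdef, Pi.single_apply, hki]
          by_cases hkJ : k ∈ J
          · rw [Finset.sum_eq_single k]
            · simp [hg, Pi.single_apply, Int.toNat_of_nonneg (he₂ k hki)]
            · intro a ha hak
              simp [Pi.single_apply, hak]
            · exact fun h => absurd hkJ h
          · have : ∀ a ∈ J, (v a e).toNat • (Pi.single a 1 : Fin s → ℤ) k = 0 := by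
              intro a ha
              have hak : a ≠ k := fun h => hkJ (h ▸ ha)
              simp [Pi.single_apply, hak]
            rw [Finset.sum_eq_zero this, hg, he₃ k hkJ hki]
      have hmk2 : (Submodule.Quotient.mk g :
          (Fin s → ℤ) ⧸ LinearMap.range (LinearMap.pi v))
          = ∑ a ∈ J, (v a e).toNat •
            (Submodule.Quotient.mk (Pi.single a 1) :
              (Fin s → ℤ) ⧸ LinearMap.range (LinearMap.pi v)) := by
        rw [hg_eq]
        rw [show (Submodule.Quotient.mk : (Fin s → ℤ) →
            (Fin s → ℤ) ⧸ LinearMap.range (LinearMap.pi v))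
            = (LinearMap.range (LinearMap.pi v)).mkQ from rfl]
        rw [map_sum]
        simp only [map_nsmul]
      rw [hmk, hmk2]
      refine AddSubmonoid.sum_mem _ fun a ha => ?_
      have hm : (Submodule.Quotient.mk (Pi.single a 1) :
          (Fin s → ℤ) ⧸ LinearMap.range (LinearMap.pi v)) ∈
          AddSubmonoid.closure
            {x : (Fin s → ℤ) ⧸ LinearMap.range (LinearMap.pi v) |
              ∃ i ∈ J, x = Submodule.Quotient.mk (Pi.single i 1)} :=
        AddSubmonoid.subset_closure ⟨a, ha, rfl⟩
      exact AddSubmonoid.nsmul_mem _ hm _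
  · apply AddSubmonoid.closure_le.mpr
    rintro x ⟨i, hi, rfl⟩
    exact AddSubmonoid.subset_closure ⟨i, Or.inl hi, rfl⟩
end
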